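/- Let ι be a finite nonempty index set and equip ℝ^ι with the supremum norm ‖·‖_∞. Let f : ℝ^ι → ℝ be differentiable with Fréchet derivative Lipschitz continuous with constant L ≥ 0, let V ⊆ ι, E ∈ ℝ^ι, δ ≥ 0, and let g : ℝ^ι → ℝ satisfy |f(y) − g(y)| ≤ B for every y with ‖y − E‖_∞ ≤ δ, where B ≥ 0. Then the infimum, over all Δ ∈ ℝ^ι with Δ_i = 0 for i ∉ V and |Δ_i| ≤ δ for all i, of g(E + Δ) is at least f(E) − δ · Σ_{i∈V} |f′(E)(e_i)| − (L/2)·δ² − B. -/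

import Mathlib

/-!
On the segment `t ↦ E + t • Δ` the Lipschitz gradient makes
`f (E + t • Δ) - t * f'(E) Δ + (L / 2) t² ‖Δ‖²` nondecreasing, which is the lower half of the
descent lemma `f (E + Δ) ≥ f E + f'(E) Δ - (L / 2) ‖Δ‖²`. Expanding `Δ` in the coordinate vectors
of `V` bounds `|f'(E) Δ|` by `δ ∑_{i ∈ V} |f'(E) eᵢ|`, `‖Δ‖∞ ≤ δ` bounds the curvature term, and
the bias bound transfers the estimate from `f` to `g` at `E + Δ`.
-/

open Set

section Descent

variable {F : Type*} [NormedAddCommGroup F] [NormedSpace ℝ F] {f : F → ℝ} {L : ℝ}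

theorem image_add_ge_of_norm_fderiv_sub_le (hf : Differentiable ℝ f) {x : F}
    (hLip : ∀ y, ‖fderiv ℝ f y - fderiv ℝ f x‖ ≤ L * ‖y - x‖) (h : F) :
    f x + fderiv ℝ f x h - L / 2 * ‖h‖ ^ 2 ≤ f (x + h) := by
  set D := fderiv ℝ f x h
  let ψ : ℝ → ℝ := fun t => f (x + t • h) - t * D + L / 2 * t ^ 2 * ‖h‖ ^ 2
  have hψ : ∀ t : ℝ, HasDerivAt ψ (fderiv ℝ f (x + t • h) h - D + L * t * ‖h‖ ^ 2) t := by
    intro t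
    have hpath : HasDerivAt (fun t : ℝ => x + t • h) h t := by
      simpa using ((hasDerivAt_id t).smul_const h).const_add x
    have hquad := ((hasDerivAt_pow 2 t).const_mul (L / 2)).mul_const (‖h‖ ^ 2)
    refine ((((hf _).hasFDerivAt.comp_hasDerivAt t hpath).sub
      ((hasDerivAt_id t).mul_const D)).add hquad).congr_deriv ?_
    simp only [one_mul]
    ring
  have hψ'_nonneg : ∀ t ∈ Icc (0 : ℝ) 1, 0 ≤ fderiv ℝ f (x + t • h) h - D + L * t * ‖h‖ ^ 2 := by
    intro t ht
    have hgap : |fderiv ℝ f (x + t • h) h - D| ≤ L * t * ‖h‖ ^ 2 :=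
      calc |fderiv ℝ f (x + t • h) h - D|
          = ‖(fderiv ℝ f (x + t • h) - fderiv ℝ f x) h‖ := rfl
        _ ≤ ‖fderiv ℝ f (x + t • h) - fderiv ℝ f x‖ * ‖h‖ := ContinuousLinearMap.le_opNorm _ _
        _ ≤ L * ‖x + t • h - x‖ * ‖h‖ := by gcongr; exact hLip _
        _ = L * t * ‖h‖ ^ 2 := by
          rw [add_sub_cancel_left, norm_smul, Real.norm_of_nonneg ht.1]
          ring
    linarith [(abs_le.mp hgap).1]
  have hmono : MonotoneOn ψ (Icc 0 1) :=
    monotoneOn_of_deriv_nonneg (convex_Icc 0 1)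
      (fun t _ => (hψ t).continuousAt.continuousWithinAt)
      (fun t _ => (hψ t).differentiableAt.differentiableWithinAt)
      (fun t ht => (hψ t).deriv ▸ hψ'_nonneg t (interior_subset ht))
  have hends : ψ 0 ≤ ψ 1 :=
    hmono (left_mem_Icc.2 zero_le_one) (right_mem_Icc.2 zero_le_one) zero_le_one
  simp only [ψ] at hends
  norm_num at hends
  linarith

end Descent

theorem abs_apply_le_mul_sum_abs_apply_single {ι : Type*} [Fintype ι] [DecidableEq ι]
    (φ : (ι → ℝ) →ₗ[ℝ] ℝ) {V : Finset ι} {Δ : ι → ℝ} {δ : ℝ}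
    (hsupp : ∀ i ∉ V, Δ i = 0) (hbound : ∀ i, |Δ i| ≤ δ) :
    |φ Δ| ≤ δ * ∑ i ∈ V, |φ (Pi.single i 1)| := by
  have hΔ : Δ = ∑ i ∈ V, Pi.single i (Δ i) := by
    rw [Finset.sum_subset (Finset.subset_univ V) fun i _ hi => by rw [hsupp i hi, Pi.single_zero],
      Finset.univ_sum_single]
  have hφΔ : φ Δ = ∑ i ∈ V, Δ i * φ (Pi.single i 1) := by
    conv_lhs => rw [hΔ, map_sum]
    refine Finset.sum_congr rfl fun i _ => ?_
    rw [← smul_eq_mul, ← map_smul, ← Pi.single_smul, smul_eq_mul, mul_one]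
  rw [hφΔ, Finset.mul_sum]
  refine (Finset.abs_sum_le_sum_abs _ _).trans (Finset.sum_le_sum fun i _ => ?_)
  rw [abs_mul]
  exact mul_le_mul_of_nonneg_right (hbound i) (abs_nonneg _)

theorem composite_score_robustness_certificate_general
    {ι : Type*} [Fintype ι] [DecidableEq ι]
    (f : (ι → ℝ) → ℝ) (hf : Differentiable ℝ f)
    (L : ℝ) (hL : 0 ≤ L)
    (hLip : ∀ x y : ι → ℝ, ‖fderiv ℝ f x - fderiv ℝ f y‖ ≤ L * ‖x - y‖)
    (V : Finset ι) (E : ι → ℝ) (δ : ℝ) (hδ : 0 ≤ δ)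
    (g : (ι → ℝ) → ℝ) (B : ℝ)
    (hbias : ∀ y : ι → ℝ, ‖y - E‖ ≤ δ → |f y - g y| ≤ B) :
    ∀ Δ : ι → ℝ, (∀ i ∉ V, Δ i = 0) → (∀ i, |Δ i| ≤ δ) →
      g (E + Δ) ≥
        f E - δ * (∑ i ∈ V, |fderiv ℝ f E (Pi.single i (1 : ℝ))|)
          - (L / 2) * δ ^ 2 - B := by
  intro Δ hsupp hbound
  have hΔ : ‖Δ‖ ≤ δ := (pi_norm_le_iff_of_nonneg hδ).2 hbound
  have htaylor := image_add_ge_of_norm_fderiv_sub_le hf (fun y => hLip y E) Δ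
  have hgrad : |fderiv ℝ f E Δ| ≤ δ * ∑ i ∈ V, |fderiv ℝ f E (Pi.single i 1)| :=
    abs_apply_le_mul_sum_abs_apply_single (fderiv ℝ f E).toLinearMap hsupp hbound
  have hcurv : L / 2 * ‖Δ‖ ^ 2 ≤ L / 2 * δ ^ 2 := by gcongr
  have hgap := hbias (E + Δ) (by rwa [add_sub_cancel_left])
  linarith [(abs_le.mp hgrad).1, (abs_le.mp hgap).2]

/-- Full Composite Score Robustness Certificate schema (Theorem 2):
the sharp score `g` at any coalition-supported ℓ∞-bounded perturbation of `E`
is bounded below by the smooth score at `E` minus the gradient term, the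
curvature penalty, and the softmax–argmax bias `B`. -/
theorem composite_score_robustness_certificate
    {ι : Type*} [Fintype ι] [Nonempty ι] [DecidableEq ι]
    (f : (ι → ℝ) → ℝ) (hf : Differentiable ℝ f)
    (L : ℝ) (hL : 0 ≤ L)
    (hLip : ∀ x y : ι → ℝ, ‖fderiv ℝ f x - fderiv ℝ f y‖ ≤ L * ‖x - y‖)
    (V : Finset ι) (E : ι → ℝ) (δ : ℝ) (hδ : 0 ≤ δ)
    (g : (ι → ℝ) → ℝ) (B : ℝ) (hB : 0 ≤ B)
    (hbias : ∀ y : ι → ℝ, ‖y - E‖ ≤ δ → |f y - g y| ≤ B) :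
    ∀ Δ : ι → ℝ, (∀ i ∉ V, Δ i = 0) → (∀ i, |Δ i| ≤ δ) →
      g (E + Δ) ≥
        f E - δ * (∑ i ∈ V, |fderiv ℝ f E (Pi.single i (1 : ℝ))|)
          - (L / 2) * δ ^ 2 - B :=
  composite_score_robustness_certificate_general f hf L hL hLip V E δ hδ g B hbias
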